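/- Let X be a Polish Abelian group and A ⊆ X. Then A is Haar-thin if and only if A − A = {a − b : a, b ∈ A} is not a neighborhood of zero in X. -/

import Mathlib

open Set Filter Topology Pointwise MeasureTheory

/-- A Borel set `A` in a topological Abelian group is *Haar-meager* if there is a continuous
map `f` from the Cantor cube `ℕ → Bool` such that `f ⁻¹' (A + x)` is meager for every `x`. -/
def HaarMeager {X : Type*} [TopologicalSpace X] [AddCommGroup X] (A : Set X) : Prop :=
  ∃ f : (ℕ → Bool) → X, Continuous f ∧ ∀ x : X, IsMeagre (f ⁻¹' ((fun a => a + x) '' A))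

/-- A set `A` is *Haar-null* if there is a Borel probability measure `μ` on `X` such that
`μ (A + x) = 0` for every `x ∈ X`. -/
def HaarNull {X : Type*} [MeasurableSpace X] [AddCommGroup X] (A : Set X) : Prop :=
  ∃ μ : Measure X, IsProbabilityMeasure μ ∧ ∀ x : X, μ ((fun a => a + x) '' A) = 0

/-- A subset `T` of the Cantor cube is *thin* if for every coordinate `n`, any two elements
of `T` agreeing at all coordinates except possibly `n` are equal. -/
def IsThinSet (T : Set (ℕ → Bool)) : Prop :=
  ∀ n : ℕ, ∀ s ∈ T, ∀ t ∈ T, (∀ m : ℕ, m ≠ n → s m = t m) → s = t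

/-- A set `A` is *Haar-thin* if there is a continuous map `f` from the Cantor cube such that
`f ⁻¹' (A + x)` is thin for every `x`. -/
def HaarThin {X : Type*} [TopologicalSpace X] [AddCommGroup X] (A : Set X) : Prop :=
  ∃ f : (ℕ → Bool) → X, Continuous f ∧ ∀ x : X, IsThinSet (f ⁻¹' ((fun a => a + x) '' A))

/-- A set `A` is *null-finite* if there is a null sequence `(x n)` such that
`{n | x n + y ∈ A}` is finite for every `y`. -/
def NullFinite {X : Type*} [TopologicalSpace X] [AddCommGroup X] (A : Set X) : Prop :=
  ∃ x : ℕ → X, Tendsto x atTop (nhds 0) ∧ ∀ y : X, {n : ℕ | x n + y ∈ A}.Finite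

/-- A set `A` is *Haar-open* if for every compact `K` and `p ∈ K` there is `x` such that
`K ∩ (A + x)` is a neighborhood of `p` in the subspace `K`. -/
def HaarOpen {X : Type*} [TopologicalSpace X] [AddCommGroup X] (A : Set X) : Prop :=
  ∀ K : Set X, IsCompact K → ∀ p ∈ K, ∃ x : X,
    K ∩ ((fun a => a + x) '' A) ∈ nhdsWithin p K


/-! If `f` is continuous and `sₙ` is `s` with coordinate `n` flipped, then `f sₙ - f s → 0`; so
when `A - A` is a neighbourhood of `0`, some `f sₙ` and `f s` lie in one translate of `A`.
Conversely, when `A - A` is not a neighbourhood of `0`, choose `zₙ ∉ A - A` recursively, so small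
(for a complete metric) that the series `∑ sₙ zₙ` converge uniformly in `s`. Two sequences
differing only at `n` are then mapped to points differing by `± zₙ`, which never lie in a common
translate of `A`. -/

section HaarThin

variable {X : Type*}

section Translates

variable [AddCommGroup X]

theorem exists_mem_image_add_right_iff_sub_mem_sub {A : Set X} {p q : X} :
    (∃ x, p ∈ (fun a => a + x) '' A ∧ q ∈ (fun a => a + x) '' A) ↔ p - q ∈ A - A := by
  constructor
  · rintro ⟨x, ⟨a, ha, rfl⟩, ⟨b, hb, rfl⟩⟩
    exact ⟨a, ha, b, hb, (add_sub_add_right_eq_sub a b x).symm⟩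
  · rintro ⟨a, ha, b, hb, hab : a - b = p - q⟩
    refine ⟨p - a, ⟨a, ha, add_sub_cancel a p⟩, ⟨b, hb, ?_⟩⟩
    calc b + (p - a) = p - (a - b) := by abel
      _ = q := by rw [hab, sub_sub_cancel]

theorem forall_isThinSet_preimage_iff {A : Set X} {f : (ℕ → Bool) → X} :
    (∀ x, IsThinSet (f ⁻¹' ((fun a => a + x) '' A))) ↔
      ∀ n s t, (∀ m ≠ n, s m = t m) → s n = true → t n = false → f s - f t ∉ A - A := by
  constructor
  · intro hthin n s t hst hs ht hsub
    obtain ⟨x, hsx, htx⟩ := exists_mem_image_add_right_iff_sub_mem_sub.2 hsub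
    rw [hthin x n s hsx t htx hst, ht] at hs
    exact Bool.false_ne_true hs
  · intro h x n s hs t ht hst
    funext m
    by_cases hm : m = n
    · subst hm
      cases hsm : s m <;> cases htm : t m
      · rfl
      · exact absurd (exists_mem_image_add_right_iff_sub_mem_sub.1 ⟨x, ht, hs⟩)
          (h m t s (fun k hk => (hst k hk).symm) htm hsm)
      · exact absurd (exists_mem_image_add_right_iff_sub_mem_sub.1 ⟨x, hs, ht⟩)
          (h m s t hst hsm htm)
      · rfl
    · exact hst m hm

theorem haarThin_iff [TopologicalSpace X] {A : Set X} :
    HaarThin A ↔ ∃ f : (ℕ → Bool) → X, Continuous f ∧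
      ∀ n s t, (∀ m ≠ n, s m = t m) → s n = true → t n = false → f s - f t ∉ A - A := by
  simp only [HaarThin, forall_isThinSet_preimage_iff]

end Translates

theorem tendsto_update_atTop {β : Type*} [TopologicalSpace β] (s : ℕ → β) (b : β) :
    Tendsto (fun n => Function.update s n b) atTop (𝓝 s) := by
  refine tendsto_pi_nhds.2 fun m => tendsto_const_nhds.congr' ?_
  filter_upwards [eventually_gt_atTop m] with n hn
  exact (Function.update_of_ne hn.ne _ _).symm

theorem sub_notMem_nhds_zero_of_haarThin [AddCommGroup X] [TopologicalSpace X]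
    [IsTopologicalAddGroup X] {A : Set X} (hA : HaarThin A) : A - A ∉ 𝓝 0 := by
  intro hnhds
  obtain ⟨f, hf, hthin⟩ := haarThin_iff.1 hA
  let s : ℕ → Bool := fun _ => false
  have hlim : Tendsto (fun n => f (Function.update s n true) - f s) atTop (𝓝 0) := by
    simpa using ((hf.tendsto s).comp (tendsto_update_atTop s true)).sub_const (f s)
  obtain ⟨n, hn⟩ := (hlim.eventually_mem hnhds).exists
  exact hthin n _ s (fun m hm => Function.update_of_ne hm _ _) (Function.update_self ..) rfl hn

section CantorSum

variable [AddCommGroup X]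

def cantorPartialSum (z : ℕ → X) (k : ℕ) (s : ℕ → Bool) : X :=
  ∑ n ∈ Finset.range k, if s n then z n else 0

theorem cantorPartialSum_succ (z : ℕ → X) (k : ℕ) (s : ℕ → Bool) :
    cantorPartialSum z (k + 1) s = cantorPartialSum z k s + if s k then z k else 0 :=
  Finset.sum_range_succ _ _

theorem cantorPartialSum_sub_cantorPartialSum {z : ℕ → X} {s t : ℕ → Bool} {n k : ℕ}
    (hst : ∀ m ≠ n, s m = t m) (hs : s n = true) (ht : t n = false) (hk : n < k) :
    cantorPartialSum z k s - cantorPartialSum z k t = z n := by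
  rw [cantorPartialSum, cantorPartialSum, ← Finset.sum_sub_distrib,
    Finset.sum_eq_single_of_mem n (Finset.mem_range.2 hk)
      fun m _ hm => by rw [hst m hm, sub_self]]
  simp [hs, ht]

theorem continuous_cantorPartialSum [TopologicalSpace X] [ContinuousAdd X] (z : ℕ → X) (k : ℕ) :
    Continuous (cantorPartialSum z k) :=
  continuous_finsetSum _ fun n _ =>
    (continuous_of_discreteTopology (f := fun b : Bool => if b then z n else 0)).comp
      (continuous_apply n)

theorem exists_forall_notMem_dist_add_lt [PseudoMetricSpace X] [ContinuousAdd X] {S : Set X}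
    (hS : S ∉ 𝓝 0) (F : Finset X) {ε : ℝ} (hε : 0 < ε) :
    ∃ z ∉ S, ∀ v ∈ F, dist (v + z) v < ε := by
  have hnhds : {z : X | ∀ v ∈ F, dist (v + z) v < ε} ∈ 𝓝 0 := by
    refine (Finset.eventually_all F).2 fun v _ => ?_
    have hcont : Continuous fun z : X => dist (v + z) v := by fun_prop
    exact hcont.continuousAt.eventually_lt continuousAt_const (by simpa using hε)
  obtain ⟨z, hzF, hzS⟩ := not_subset.1 fun h => hS (mem_of_superset hnhds h)
  exact ⟨z, hzS, hzF⟩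

theorem exists_forall_notMem_dist_cantorPartialSum_le [PseudoMetricSpace X] [ContinuousAdd X]
    {S : Set X} (hS : S ∉ 𝓝 0) :
    ∃ z : ℕ → X, (∀ n, z n ∉ S) ∧
      ∀ k s, dist (cantorPartialSum z k s) (cantorPartialSum z (k + 1) s) ≤ 1 / 2 / 2 ^ k := by
  classical
  choose pick hpickS hpickDist using fun (F : Finset X) (k : ℕ) =>
    exists_forall_notMem_dist_add_lt hS F (by positivity : (0 : ℝ) < 1 / 2 / 2 ^ k)
  -- `P k`, the set of all `2 ^ k` partial sums of length `k`, is built together with `z k`.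
  let P : ℕ → Finset X := fun k => Nat.rec {0} (fun k P => P ∪ P.image (· + pick P k)) k
  let z : ℕ → X := fun k => pick (P k) k
  have hmem : ∀ k s, cantorPartialSum z k s ∈ P k := by
    intro k s
    induction k with
    | zero => simp [cantorPartialSum, P]
    | succ k ih =>
      rw [cantorPartialSum_succ]
      split_ifs
      · exact Finset.mem_union_right _ (Finset.mem_image_of_mem _ ih)
      · rw [add_zero]
        exact Finset.mem_union_left _ ih
  refine ⟨z, fun n => hpickS _ n, fun k s => ?_⟩
  rw [cantorPartialSum_succ, dist_comm]
  split_ifs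
  · exact (hpickDist (P k) k _ (hmem k s)).le
  · rw [add_zero, dist_self]
    positivity

variable [MetricSpace X] [CompleteSpace X]

noncomputable def cantorSum (z : ℕ → X) (s : ℕ → Bool) : X :=
  limUnder atTop fun k => cantorPartialSum z k s

variable {z : ℕ → X} {C : ℝ}
  (hz : ∀ k s, dist (cantorPartialSum z k s) (cantorPartialSum z (k + 1) s) ≤ C / 2 / 2 ^ k)
include hz

theorem tendsto_cantorPartialSum (s : ℕ → Bool) :
    Tendsto (fun k => cantorPartialSum z k s) atTop (𝓝 (cantorSum z s)) :=
  (cauchySeq_of_le_geometric_two (hz · s)).tendsto_limUnder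

theorem tendstoUniformly_cantorPartialSum :
    TendstoUniformly (cantorPartialSum z) (cantorSum z) atTop := by
  rw [Metric.tendstoUniformly_iff]
  intro ε hε
  have hbound : Tendsto (fun k : ℕ => C / 2 ^ k) atTop (𝓝 0) :=
    tendsto_const_nhds.div_atTop (tendsto_pow_atTop_atTop_of_one_lt one_lt_two)
  filter_upwards [hbound.eventually (gt_mem_nhds hε)] with k hk s
  rw [dist_comm]
  exact (dist_le_of_le_geometric_two_of_tendsto (hz · s) (tendsto_cantorPartialSum hz s) k).trans_lt
    hk

theorem continuous_cantorSum [ContinuousAdd X] : Continuous (cantorSum z) :=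
  (tendstoUniformly_cantorPartialSum hz).continuous
    (Eventually.of_forall (continuous_cantorPartialSum z)).frequently

theorem cantorSum_sub_cantorSum [IsTopologicalAddGroup X] {s t : ℕ → Bool} {n : ℕ}
    (hst : ∀ m ≠ n, s m = t m) (hs : s n = true) (ht : t n = false) :
    cantorSum z s - cantorSum z t = z n := by
  refine tendsto_nhds_unique
    ((tendsto_cantorPartialSum hz s).sub (tendsto_cantorPartialSum hz t)) ?_
  refine tendsto_const_nhds.congr' ?_
  filter_upwards [eventually_gt_atTop n] with k hk
  exact (cantorPartialSum_sub_cantorPartialSum hst hs ht hk).symm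

end CantorSum

open TopologicalSpace in
theorem haarThin_of_sub_notMem_nhds_zero [AddCommGroup X] [TopologicalSpace X]
    [IsTopologicalAddGroup X] [IsCompletelyMetrizableSpace X] {A : Set X} (hA : A - A ∉ 𝓝 0) :
    HaarThin A := by
  let := upgradeIsCompletelyMetrizable X
  obtain ⟨z, hzA, hz⟩ := exists_forall_notMem_dist_cantorPartialSum_le hA
  refine haarThin_iff.2 ⟨cantorSum z, continuous_cantorSum hz, fun n s t hst hs ht => ?_⟩
  rw [cantorSum_sub_cantorSum hz hst hs ht]
  exact hzA n

end HaarThin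

/-- A subset `A` of a Polish Abelian group is Haar-thin if and only if `A - A` is not a
neighborhood of zero. -/
theorem statement16 {X : Type*} [TopologicalSpace X] [AddCommGroup X]
    [IsTopologicalAddGroup X] [PolishSpace X] (A : Set X) :
    HaarThin A ↔ ¬ (A - A ∈ nhds (0 : X)) :=
  ⟨sub_notMem_nhds_zero_of_haarThin, haarThin_of_sub_notMem_nhds_zero⟩
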